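/- arXiv:2010.09058 — 6 statements merged into one kernel-verified Lean document; each statement's English description precedes it below -/
import Mathlib

section
/- Let $A$ be a finite-dimensional real vector space, $\pi_A \in \wedge^2 A$ a bivector, and $B \subset A$ a subspace with $\pi_A^{\sharp}(B^{\circ}) \cap B = 0$. Then for every $\xi \in B^*$ there exists $\widetilde{\xi} \in A^*$ with $\widetilde{\xi}|_B = \xi$ and $\pi_A^{\sharp}(\widetilde{\xi}) \in B$. -/
open Module Submodule

set_option maxHeartbeats 1000000
set_option synthInstance.maxHeartbeats 400000

/-- Auxiliary rank-nullity: `finrank (f(p)) + finrank (p ⊓ ker f) = finrank p`. -/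
lemma aux_rn {M N : Type*} [AddCommGroup M] [Module ℝ M] [AddCommGroup N] [Module ℝ N]
    [FiniteDimensional ℝ M] (f : M →ₗ[ℝ] N) (p : Submodule ℝ M) :
    finrank ℝ (p.map f) + finrank ℝ ↥(p ⊓ LinearMap.ker f) = finrank ℝ p := by
  have h := LinearMap.finrank_range_add_finrank_ker (f.domRestrict p)
  rw [LinearMap.range_domRestrict, LinearMap.ker_domRestrict] at h
  rwa [← Submodule.finrank_map_subtype_eq (p := p), Submodule.map_comap_subtype] at h

/-- Auxiliary: `finrank W + finrank W° = finrank V`. -/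
lemma finrank_add_finrank_dualAnnihilator' {V : Type*} [AddCommGroup V] [Module ℝ V]
    [FiniteDimensional ℝ V] (W : Submodule ℝ V) :
    finrank ℝ W + finrank ℝ W.dualAnnihilator = finrank ℝ V := by
  have e : finrank ℝ (V ⧸ W) = finrank ℝ W.dualAnnihilator :=
    LinearEquiv.finrank_eq (Subspace.quotEquivAnnihilator W)
  have h := Submodule.finrank_quotient_add_finrank W
  omega

/-- If `π_A^♯(B°) ∩ B = 0` then every `ξ ∈ B*` extends to `ξ' ∈ A*`
with `π_A^♯(ξ') ∈ B`. -/
theorem stmt1 (A : Type*) [AddCommGroup A] [Module ℝ A] [FiniteDimensional ℝ A]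
    (π : Module.Dual ℝ A →ₗ[ℝ] A)
    (hskew : ∀ ξ η : Module.Dual ℝ A, ξ (π η) = - η (π ξ))
    (B : Submodule ℝ A)
    (hB : (B.dualAnnihilator.map π) ⊓ B = ⊥) :
    ∀ ξ : Module.Dual ℝ ↥B, ∃ ξ' : Module.Dual ℝ A,
      ξ'.comp B.subtype = ξ ∧ π ξ' ∈ B := by
  classical
  -- Membership in the annihilator of `W` is exactly `π φ ∈ B`.
  have hSmem : ∀ φ : Module.Dual ℝ A, φ ∈ (B.dualAnnihilator.map π).dualAnnihilator ↔ π φ ∈ B := by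
    intro φ
    rw [Submodule.mem_dualAnnihilator]
    constructor
    · intro h
      rw [← Subspace.forall_mem_dualAnnihilator_apply_eq_zero_iff B (π φ)]
      intro η hη
      have h2 := h (π η) (Submodule.mem_map_of_mem hη)
      have h3 := hskew φ η
      linarith
    · rintro h w ⟨η, hη, rfl⟩
      rw [hskew]
      have hη' := (Submodule.mem_dualAnnihilator η).mp hη
      rw [hη' _ h]; ring
  -- The intersection of the two annihilators is `ker π ⊓ B°`.
  have hinf : (B.dualAnnihilator.map π).dualAnnihilator ⊓ B.dualAnnihilator
      = B.dualAnnihilator ⊓ LinearMap.ker π := by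
    ext φ
    simp only [Submodule.mem_inf, LinearMap.mem_ker, hSmem]
    constructor
    · rintro ⟨h1, h2⟩
      refine ⟨h2, ?_⟩
      have hmem : π φ ∈ (B.dualAnnihilator.map π) ⊓ B :=
        ⟨Submodule.mem_map_of_mem h2, h1⟩
      rw [hB] at hmem
      simpa using hmem
    · rintro ⟨h1, h2⟩
      exact ⟨by rw [h2]; exact B.zero_mem, h1⟩
  -- Rank-nullity for `π` restricted to `B°`.
  have hrn := aux_rn π B.dualAnnihilator
  -- Dimension counting: `W° ⊔ B° = ⊤`.
  have hsup : (B.dualAnnihilator.map π).dualAnnihilator ⊔ B.dualAnnihilator = ⊤ := by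
    apply Submodule.eq_top_of_finrank_eq
    have hs := Submodule.finrank_sup_add_finrank_inf_eq
      (B.dualAnnihilator.map π).dualAnnihilator B.dualAnnihilator
    rw [hinf] at hs
    have h1 := finrank_add_finrank_dualAnnihilator' (B.dualAnnihilator.map π)
    have h2 := finrank_add_finrank_dualAnnihilator' B
    have hd : finrank ℝ (Module.Dual ℝ A) = finrank ℝ A := Subspace.dual_finrank_eq
    omega
  -- Now extend `ξ`.
  intro ξ
  obtain ⟨ξ₀, hξ₀⟩ := Subspace.dualRestrict_surjective (W := B) ξ
  have hmem : ξ₀ ∈ (B.dualAnnihilator.map π).dualAnnihilator ⊔ B.dualAnnihilator := by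
    rw [hsup]; trivial
  obtain ⟨s, hs, η, hη, hsum⟩ := Submodule.mem_sup.mp hmem
  refine ⟨s, ?_, (hSmem s).mp hs⟩
  ext b
  have hb : η b = 0 := (Submodule.mem_dualAnnihilator η).mp hη b b.2
  have : ξ₀ b = ξ b := by
    rw [← hξ₀]; rfl
  have hsb : s b + η b = ξ₀ b := by
    rw [← hsum]; rfl
  simp only [LinearMap.comp_apply, Submodule.subtype_apply]
  rw [← this, ← hsb, hb, add_zero]
end

section
/- Let $V \subset W$ be finite-dimensional real vector spaces and $\pi \in \wedge^2 W$ a bivector such that $\pi^{\sharp}(V^{\circ}) \cap V = 0$. Then for any subspace $X$ with $V \subset X \subset W$ such that the bivector induced on $X$ exists (i.e. $\pi^{\sharp}(X^{\circ}) \cap X = 0$), the induced bivector $\pi_X$ on $X$ satisfies $\pi_X^{\sharp}(\mathrm{Ann}_{X^*}(V)) \cap V = 0$, i.e. $V$ inherits a bivector from $(X, \pi_X)$. -/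
/-- Transitivity of induced bivectors: if `V ⊆ X ⊆ W`, both `V` and `X`
inherit bivectors from `π` on `W`, and `π_X` is the induced bivector on `X`, then `V`
inherits a bivector from `(X, π_X)`, i.e. `π_X^♯(Ann_{X*}(V)) ∩ V = 0`. -/
theorem stmt3 (W : Type*) [AddCommGroup W] [Module ℝ W] [FiniteDimensional ℝ W]
    (π : Module.Dual ℝ W →ₗ[ℝ] W)
    (hskew : ∀ ξ η : Module.Dual ℝ W, ξ (π η) = - η (π ξ))
    (V X : Submodule ℝ W) (hVX : V ≤ X)
    (hV : (V.dualAnnihilator.map π) ⊓ V = ⊥)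
    (hX : (X.dualAnnihilator.map π) ⊓ X = ⊥)
    (πX : Module.Dual ℝ ↥X →ₗ[ℝ] ↥X)
    (hπXskew : ∀ f g : Module.Dual ℝ ↥X, f (πX g) = - g (πX f))
    -- π_X is the induced bivector: for any extension ξ' of ξ with π ξ' ∈ X,
    -- π_X ξ = π ξ'.
    (hπX : ∀ (ξ : Module.Dual ℝ ↥X) (ξ' : Module.Dual ℝ W),
      ξ'.comp X.subtype = ξ → π ξ' ∈ X → (πX ξ : W) = π ξ') :
    ((V.comap X.subtype).dualAnnihilator.map πX) ⊓ (V.comap X.subtype) = ⊥ := by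
  -- Existence of a good extension for every functional on X.
  have hexist : ∀ ξ : Module.Dual ℝ ↥X, ∃ ξ' : Module.Dual ℝ W,
      ξ'.comp X.subtype = ξ ∧ π ξ' ∈ X := by
    intro ξ
    obtain ⟨ξt, hξt⟩ := Subspace.dualRestrict_surjective (W := X) ξ
    -- claim : π ξt ∈ X ⊔ π(X°)
    have hmem : π ξt ∈ X ⊔ X.dualAnnihilator.map π := by
      rw [← Subspace.dualAnnihilator_dualCoannihilator_eq
        (W := X ⊔ X.dualAnnihilator.map π)]
      rw [Submodule.mem_dualCoannihilator]
      intro φ hφ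
      rw [Submodule.mem_dualAnnihilator] at hφ
      -- φ kills X and kills π(X°)
      have hφX : φ ∈ X.dualAnnihilator := by
        rw [Submodule.mem_dualAnnihilator]
        intro w hw
        exact hφ w (Submodule.mem_sup_left hw)
      have hπφX : π φ ∈ X := by
        rw [← Subspace.dualAnnihilator_dualCoannihilator_eq (W := X),
          Submodule.mem_dualCoannihilator]
        intro η hη
        have := hφ (π η) (Submodule.mem_sup_right (Submodule.mem_map_of_mem hη))
        have h2 := hskew φ η
        rw [this] at h2
        linarith [hskew η φ, h2]
      have hπφ0 : π φ = 0 := by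
        have : π φ ∈ (X.dualAnnihilator.map π) ⊓ X :=
          ⟨Submodule.mem_map_of_mem hφX, hπφX⟩
        rw [hX] at this
        exact this
      have := hskew φ ξt
      rw [show ξt (π φ) = 0 by rw [hπφ0]; simp] at this
      simpa using this
    obtain ⟨x, hx, y, hy, hxy⟩ := Submodule.mem_sup.mp hmem
    obtain ⟨η, hη, rfl⟩ := hy
    refine ⟨ξt - η, ?_, ?_⟩
    · ext v
      have hη' : η ∈ X.dualAnnihilator := hη
      simp only [LinearMap.comp_apply, LinearMap.sub_apply, Submodule.subtype_apply]
      rw [(Submodule.mem_dualAnnihilator η).mp hη' v v.2, sub_zero]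
      have := congrFun (congrArg DFunLike.coe hξt) v
      simpa [Submodule.dualRestrict_apply] using this
    · rw [map_sub]
      have : π ξt - π η = x := by rw [← hxy]; abel
      rw [this]; exact hx
  rw [eq_bot_iff]
  rintro w ⟨hw1, hw2⟩
  obtain ⟨ξ, hξann, rfl⟩ := hw1
  obtain ⟨ξ', hξ'ext, hξ'X⟩ := hexist ξ
  have hcoe : ((πX ξ : ↥X) : W) = π ξ' := hπX ξ ξ' hξ'ext hξ'X
  have hξ'ann : ξ' ∈ V.dualAnnihilator := by
    rw [Submodule.mem_dualAnnihilator]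
    intro v hv
    have hvX : v ∈ X := hVX hv
    have : ξ' v = ξ ⟨v, hvX⟩ := by
      have := congrFun (congrArg DFunLike.coe hξ'ext) (⟨v, hvX⟩ : X)
      simpa using this
    rw [this]
    exact (Submodule.mem_dualAnnihilator ξ).mp hξann ⟨v, hvX⟩ hv
  have hmemV : ((πX ξ : ↥X) : W) ∈ V := hw2
  have : ((πX ξ : ↥X) : W) ∈ (V.dualAnnihilator.map π) ⊓ V := by
    refine ⟨?_, hmemV⟩
    rw [hcoe]
    exact Submodule.mem_map_of_mem hξ'ann
  rw [hV] at this
  have hz : ((πX ξ : ↥X) : W) = 0 := this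
  simpa [Submodule.mem_bot] using Subtype.ext hz
end

section
/- Let $p: W \to U$ be a surjective linear map between finite-dimensional real vector spaces with kernel $V$, and let $\pi_W \in \wedge^2 W$, $\pi_U \in \wedge^2 U$ be bivectors with $(\wedge^2 p)(\pi_W) = \pi_U$ (i.e. $p$ is a Poisson map at the linear level). If $\pi_W^{\sharp}(V^{\circ}) \cap V = 0$, then for every subspace $Y \subset U$ with $\pi_U^{\sharp}(Y^{\circ}) \cap Y = 0$, the preimage $X := p^{-1}(Y)$ satisfies $\pi_W^{\sharp}(X^{\circ}) \cap X = 0$. -/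
/-- Linear-algebraic core of "coregular Poisson submersions pull coregular
submanifolds back to coregular submanifolds": if `p : W → U` is a surjective Poisson linear
map with kernel `V`, `π_W^♯(V°) ∩ V = 0`, and `Y ⊆ U` satisfies `π_U^♯(Y°) ∩ Y = 0`,
then `X := p⁻¹(Y)` satisfies `π_W^♯(X°) ∩ X = 0`. -/
theorem stmt4 (W U : Type*) [AddCommGroup W] [Module ℝ W] [FiniteDimensional ℝ W]
    [AddCommGroup U] [Module ℝ U] [FiniteDimensional ℝ U]
    (p : W →ₗ[ℝ] U) (hp : Function.Surjective p)
    (πW : Module.Dual ℝ W →ₗ[ℝ] W)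
    (hWskew : ∀ ξ η : Module.Dual ℝ W, ξ (πW η) = - η (πW ξ))
    (πU : Module.Dual ℝ U →ₗ[ℝ] U)
    (hUskew : ∀ ξ η : Module.Dual ℝ U, ξ (πU η) = - η (πU ξ))
    -- p is Poisson at the linear level: p ∘ πW^♯ ∘ p^* = πU^♯
    (hPoisson : ∀ η : Module.Dual ℝ U, p (πW (η.comp p)) = πU η)
    (hV : ((LinearMap.ker p).dualAnnihilator.map πW) ⊓ LinearMap.ker p = ⊥)
    (Y : Submodule ℝ U) (hY : (Y.dualAnnihilator.map πU) ⊓ Y = ⊥) :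
    ((Y.comap p).dualAnnihilator.map πW) ⊓ (Y.comap p) = ⊥ := by
  rw [eq_bot_iff]
  rintro x hx
  rw [Submodule.mem_inf] at hx
  obtain ⟨hx1, hx2⟩ := hx
  obtain ⟨ξ, hξ, rfl⟩ := hx1
  replace hξ : ∀ w ∈ Submodule.comap p Y, ξ w = 0 := (Submodule.mem_dualAnnihilator ξ).mp hξ
  -- ξ vanishes on ker p
  have hker : LinearMap.ker p ≤ LinearMap.ker ξ := by
    intro v hv
    rw [LinearMap.mem_ker]
    exact hξ v (by simp [Submodule.mem_comap, LinearMap.mem_ker.mp hv])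
  -- factor ξ through p
  let e := p.quotKerEquivOfSurjective hp
  let η : Module.Dual ℝ U := ((LinearMap.ker p).liftQ ξ hker) ∘ₗ (e.symm : U →ₗ[ℝ] _)
  have hηp : ∀ w : W, η (p w) = ξ w := by
    intro w
    have he : e.symm (p w) = Submodule.Quotient.mk w := by
      rw [LinearEquiv.symm_apply_eq]
      rfl
    simp only [η, LinearMap.comp_apply, LinearEquiv.coe_coe, he]
    rfl
  have hηξ : η.comp p = ξ := by ext w; exact hηp w
  -- η annihilates Y
  have hηY : η ∈ Y.dualAnnihilator := by
    rw [Submodule.mem_dualAnnihilator]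
    intro u hu
    obtain ⟨w, rfl⟩ := hp u
    exact (hηp w).trans (hξ w (Submodule.mem_comap.mpr hu))
  -- p (πW ξ) ∈ πU(Y°) ∩ Y = 0
  have hpx : p (πW ξ) = 0 := by
    have h1 : p (πW ξ) ∈ (Y.dualAnnihilator.map πU) ⊓ Y := by
      rw [Submodule.mem_inf]
      constructor
      · rw [← hηξ, hPoisson η]
        exact Submodule.mem_map_of_mem hηY
      · exact hx2
    rw [hY] at h1
    exact h1
  -- ξ annihilates ker p, so πW ξ ∈ πW(V°) ∩ ker p = 0
  have hfinal : πW ξ ∈ ((LinearMap.ker p).dualAnnihilator.map πW) ⊓ LinearMap.ker p := by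
    rw [Submodule.mem_inf]
    refine ⟨Submodule.mem_map_of_mem ?_, LinearMap.mem_ker.mpr hpx⟩
    rw [Submodule.mem_dualAnnihilator]
    exact fun v hv => hker hv
  rw [hV] at hfinal
  exact hfinal
end

section
/- Let $p: W \to U$ be a surjective linear map with kernel $V$, and let $\pi_W, \pi_U$ be bivectors with $(\wedge^2 p)(\pi_W) = \pi_U$. Then $\mathrm{Gr}(\pi_W) \cap (V \oplus V^{\circ}) = \{\pi_W^{\sharp}(p^*\eta) + p^*\eta : \eta \in U^*, \pi_U^{\sharp}(\eta) = 0\}$. -/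
theorem LinearMap.mem_dualAnnihilator_ker_iff {K V₁ V₂ : Type*} [Field K]
    [AddCommGroup V₁] [Module K V₁] [AddCommGroup V₂] [Module K V₂]
    (f : V₁ →ₗ[K] V₂) (ξ : Module.Dual K V₁) :
    ξ ∈ (LinearMap.ker f).dualAnnihilator ↔ ∃ η : Module.Dual K V₂, η.comp f = ξ := by
  rw [← LinearMap.range_dualMap_eq_dualAnnihilator_ker]
  rfl

theorem stmt6_general (W U : Type*) [AddCommGroup W] [Module ℝ W]
    [AddCommGroup U] [Module ℝ U]
    (p : W →ₗ[ℝ] U)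
    (πW : Module.Dual ℝ W →ₗ[ℝ] W)
    (πU : Module.Dual ℝ U →ₗ[ℝ] U)
    (hPoisson : ∀ η : Module.Dual ℝ U, p (πW (η.comp p)) = πU η) :
    {q : W × Module.Dual ℝ W |
        (∃ ξ : Module.Dual ℝ W, q = (πW ξ, ξ)) ∧
        q.1 ∈ LinearMap.ker p ∧ q.2 ∈ (LinearMap.ker p).dualAnnihilator}
    = {q : W × Module.Dual ℝ W |
        ∃ η : Module.Dual ℝ U, πU η = 0 ∧ q = (πW (η.comp p), η.comp p)} := by
  ext q
  constructor
  · rintro ⟨⟨ξ, rfl⟩, hker, hann⟩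
    obtain ⟨η, rfl⟩ := (p.mem_dualAnnihilator_ker_iff ξ).mp hann
    exact ⟨η, (hPoisson η).symm.trans hker, rfl⟩
  · rintro ⟨η, hη, rfl⟩
    exact ⟨⟨_, rfl⟩, (hPoisson η).trans hη, (p.mem_dualAnnihilator_ker_iff _).mpr ⟨η, rfl⟩⟩

/-- For a surjective Poisson linear map `p : (W,π_W) → (U,π_U)` with kernel
`V`, the intersection `Gr(π_W) ∩ (V ⊕ V°)` equals
`{π_W^♯(p^*η) + p^*η : η ∈ U*, π_U^♯(η) = 0}`. -/
theorem stmt6 (W U : Type*) [AddCommGroup W] [Module ℝ W] [FiniteDimensional ℝ W]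
    [AddCommGroup U] [Module ℝ U] [FiniteDimensional ℝ U]
    (p : W →ₗ[ℝ] U) (hp : Function.Surjective p)
    (πW : Module.Dual ℝ W →ₗ[ℝ] W)
    (hWskew : ∀ ξ η : Module.Dual ℝ W, ξ (πW η) = - η (πW ξ))
    (πU : Module.Dual ℝ U →ₗ[ℝ] U)
    (hUskew : ∀ ξ η : Module.Dual ℝ U, ξ (πU η) = - η (πU ξ))
    (hPoisson : ∀ η : Module.Dual ℝ U, p (πW (η.comp p)) = πU η) :
    {q : W × Module.Dual ℝ W |
        (∃ ξ : Module.Dual ℝ W, q = (πW ξ, ξ)) ∧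
        q.1 ∈ LinearMap.ker p ∧ q.2 ∈ (LinearMap.ker p).dualAnnihilator}
    = {q : W × Module.Dual ℝ W |
        ∃ η : Module.Dual ℝ U, πU η = 0 ∧ q = (πW (η.comp p), η.comp p)} :=
  stmt6_general W U p πW πU hPoisson
end

section
/- Let $W$ be a finite-dimensional vector space, $V \subset W$ a subspace, and $\pi \in \wedge^2 W$ with $\pi^{\sharp}(V^{\circ}) \cap V = 0$. Suppose $\pi_V \in \wedge^2 V$ satisfies: for all $\xi \in W^*$ with $\pi^{\sharp}(\xi) \in V$, one has $\pi_V^{\sharp}(\xi|_{V}) = \pi^{\sharp}(\xi)$ (i.e. $\pi_V$ induces on $V$ the same bivector as $\pi$). Then $\mathrm{Gr}(\pi_V) = \big(\mathrm{Gr}(\pi) \cap (V \oplus W^*)\big) + V^{\circ}$ as subspaces of $W \oplus W^*$, where $\mathrm{Gr}(\pi_V) = \{\pi_V^{\sharp}(\xi|_V) + \xi : \xi \in W^*\}$. -/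
/-- If `π^♯(V°) ∩ V = 0` and `π_V ∈ ∧²V` induces on `V` the same bivector
as `π`, then `Gr(π_V) = (Gr(π) ∩ (V ⊕ W*)) + V°` inside `W ⊕ W*`. -/
theorem stmt11 (W : Type*) [AddCommGroup W] [Module ℝ W] [FiniteDimensional ℝ W]
    (V : Submodule ℝ W)
    (π : Module.Dual ℝ W →ₗ[ℝ] W)
    (hskew : ∀ ξ η : Module.Dual ℝ W, ξ (π η) = - η (π ξ))
    (hcor : (V.dualAnnihilator.map π) ⊓ V = ⊥)
    (πV : Module.Dual ℝ ↥V →ₗ[ℝ] ↥V)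
    (hπVskew : ∀ f g : Module.Dual ℝ ↥V, f (πV g) = - g (πV f))
    -- π_V induces on V the same bivector as π:
    (hind : ∀ ξ : Module.Dual ℝ W, π ξ ∈ V → (πV (ξ.comp V.subtype) : W) = π ξ) :
    {q : W × Module.Dual ℝ W |
        ∃ ξ : Module.Dual ℝ W, q = (((πV (ξ.comp V.subtype)) : W), ξ)}
    = {q : W × Module.Dual ℝ W |
        ∃ ξ η : Module.Dual ℝ W, π ξ ∈ V ∧ η ∈ V.dualAnnihilator ∧
          q = (π ξ, ξ + η)} := by
  have hcomp : ∀ η : Module.Dual ℝ W, η ∈ V.dualAnnihilator →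
      η.comp V.subtype = 0 := by
    intro η hη
    ext v
    exact (Submodule.mem_dualAnnihilator η).mp hη v v.2
  ext q
  simp only [Set.mem_setOf_eq]
  constructor
  · rintro ⟨ξ, rfl⟩
    have key : π ξ ∈ V ⊔ V.dualAnnihilator.map π := by
      rw [← Subspace.dualAnnihilator_dualCoannihilator_eq
        (W := V ⊔ V.dualAnnihilator.map π), Submodule.mem_dualCoannihilator]
      intro ζ hζ
      rw [Submodule.mem_dualAnnihilator] at hζ
      have hζV : ζ ∈ V.dualAnnihilator := by
        rw [Submodule.mem_dualAnnihilator]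
        intro w hw
        exact hζ w (Submodule.mem_sup_left hw)
      have hπζ : π ζ = 0 := by
        have hmem : π ζ ∈ V := by
          rw [← Subspace.dualAnnihilator_dualCoannihilator_eq (W := V),
            Submodule.mem_dualCoannihilator]
          intro η hη
          have h1 := hζ (π η) (Submodule.mem_sup_right (Submodule.mem_map_of_mem hη))
          have h2 := hskew ζ η
          linarith
        have : π ζ ∈ (V.dualAnnihilator.map π) ⊓ V :=
          ⟨Submodule.mem_map_of_mem hζV, hmem⟩
        rw [hcor] at this
        exact this
      have h3 := hskew ζ ξ
      rw [hπζ] at h3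
      simpa using h3
    obtain ⟨v, hv, w, hw, hsum⟩ := Submodule.mem_sup.mp key
    obtain ⟨η, hη, rfl⟩ := hw
    have hmem : π (ξ - η) ∈ V := by
      have : π (ξ - η) = v := by
        rw [map_sub]
        rw [← hsum]
        abel
      rw [this]; exact hv
    refine ⟨ξ - η, η, hmem, hη, ?_⟩
    have hres : (ξ - η).comp V.subtype = ξ.comp V.subtype := by
      rw [LinearMap.sub_comp, hcomp η hη, sub_zero]
    have := hind (ξ - η) hmem
    rw [hres] at this
    rw [this]
    simp
  · rintro ⟨ξ, η, hξ, hη, rfl⟩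
    refine ⟨ξ + η, ?_⟩
    have hres : (ξ + η).comp V.subtype = ξ.comp V.subtype := by
      rw [LinearMap.add_comp, hcomp η hη, add_zero]
    rw [hres, hind ξ hξ]
end

section
/- On $\Sigma = \mathbb{C}^2$ with real coordinates $(x_0,y_0,x_1,y_1)$, define vector fields $\mathscr{E}_i = x_i\partial_{x_i} + y_i\partial_{y_i}$ and $\mathscr{V}_i = x_i\partial_{y_i} - y_i\partial_{x_i}$ for $i=0,1$. Then the bivector $\pi_{\Sigma} = |z_0|^2 (\mathscr{E}_0+\mathscr{E}_1)\wedge(\mathscr{V}_0+\mathscr{V}_1)$, where $|z_0|^2 = x_0^2+y_0^2$, is a Poisson bivector (its Schouten bracket with itself vanishes), and the projection $p(z_0,z_1) = z_0$ maps it to the Poisson bivector $\pi_M = |z_0|^2\,\mathscr{E}_0 \wedge \mathscr{V}_0$ on $\mathbb{C}$, i.e. $p_*\pi_{\Sigma} = \pi_M \circ p$. -/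
noncomputable section

/-- `E₀ + E₁` at `z = (x₀,y₀,x₁,y₁)`: the Euler vector field. -/
def Ev (z : Fin 4 → ℝ) : Fin 4 → ℝ := z

/-- `V₀ + V₁` at `z`, where `Vᵢ = xᵢ∂yᵢ - yᵢ∂xᵢ`. -/
def Vv (z : Fin 4 → ℝ) : Fin 4 → ℝ := ![-(z 1), z 0, -(z 3), z 2]

/-- The bracket of functions induced by `π_Σ = |z₀|² (E₀+E₁)∧(V₀+V₁)`. -/
def pb (f g : (Fin 4 → ℝ) → ℝ) (z : Fin 4 → ℝ) : ℝ :=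
  ((z 0) ^ 2 + (z 1) ^ 2) *
    (fderiv ℝ f z (Ev z) * fderiv ℝ g z (Vv z) -
     fderiv ℝ f z (Vv z) * fderiv ℝ g z (Ev z))

/-- The differential of the projection `p(z₀,z₁) = z₀`. -/
def dp : (Fin 4 → ℝ) →ₗ[ℝ] ℝ × ℝ :=
  (LinearMap.proj (R := ℝ) (φ := fun _ : Fin 4 => ℝ) 0).prod
    (LinearMap.proj (R := ℝ) (φ := fun _ : Fin 4 => ℝ) 1)

/-- The bivector `π_Σ` at `z`, evaluated on a pair of covectors. -/
def PiSigma (z : Fin 4 → ℝ) (ξ η : (Fin 4 → ℝ) →ₗ[ℝ] ℝ) : ℝ :=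
  ((z 0) ^ 2 + (z 1) ^ 2) * (ξ (Ev z) * η (Vv z) - ξ (Vv z) * η (Ev z))

/-- The bivector `π_M = |z₀|² 𝓔₀ ∧ 𝓥₀` on `ℂ = ℝ²` at `w`, on a pair of covectors. -/
def PiM (w : ℝ × ℝ) (α β : ℝ × ℝ →ₗ[ℝ] ℝ) : ℝ :=
  (w.1 ^ 2 + w.2 ^ 2) * (α w * β (-w.2, w.1) - α (-w.2, w.1) * β w)

/-! ### Auxiliary material -/

/-- `Vv` as a continuous linear map. -/
def Jc : (Fin 4 → ℝ) →L[ℝ] (Fin 4 → ℝ) :=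
  ContinuousLinearMap.pi
    ![-(ContinuousLinearMap.proj 1), ContinuousLinearMap.proj 0,
      -(ContinuousLinearMap.proj 3), ContinuousLinearMap.proj 2]

lemma Jc_apply (z : Fin 4 → ℝ) : Jc z = Vv z := by
  funext i; fin_cases i <;> simp [Jc, Vv]

lemma hVv (z : Fin 4 → ℝ) : HasFDerivAt Vv Jc z := by
  have : Vv = ⇑Jc := by funext z; exact (Jc_apply z).symm
  rw [this]; exact Jc.hasFDerivAt

lemma hEv (z : Fin 4 → ℝ) : HasFDerivAt Ev (ContinuousLinearMap.id ℝ (Fin 4 → ℝ)) z :=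
  hasFDerivAt_id z

lemma VvVv (z : Fin 4 → ℝ) : Vv (Vv z) = -z := by
  funext i; fin_cases i <;> simp [Vv]

lemma Vv0 (z : Fin 4 → ℝ) : Vv z 0 = -(z 1) := by simp [Vv]

lemma Vv1 (z : Fin 4 → ℝ) : Vv z 1 = z 0 := by simp [Vv]

lemma pb_expand (f g : (Fin 4 → ℝ) → ℝ) (z : Fin 4 → ℝ) :
    pb f g z = ((z 0) ^ 2 + (z 1) ^ 2) *
      (fderiv ℝ f z z * fderiv ℝ g z (Vv z) - fderiv ℝ f z (Vv z) * fderiv ℝ g z z) := rfl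

lemma fderiv_pb (g h : (Fin 4 → ℝ) → ℝ) (hg : ContDiff ℝ (⊤ : ℕ∞) g) (hh : ContDiff ℝ (⊤ : ℕ∞) h)
    (z v : Fin 4 → ℝ) :
    fderiv ℝ (pb g h) z v =
      (2 * z 0 * v 0 + 2 * z 1 * v 1) *
        (fderiv ℝ g z z * fderiv ℝ h z (Vv z) - fderiv ℝ g z (Vv z) * fderiv ℝ h z z)
      + ((z 0) ^ 2 + (z 1) ^ 2) *
        ((fderiv ℝ (fderiv ℝ g) z v z + fderiv ℝ g z v) * fderiv ℝ h z (Vv z)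
          + fderiv ℝ g z z * (fderiv ℝ (fderiv ℝ h) z v (Vv z) + fderiv ℝ h z (Vv v))
          - ((fderiv ℝ (fderiv ℝ g) z v (Vv z) + fderiv ℝ g z (Vv v)) * fderiv ℝ h z z
          + fderiv ℝ g z (Vv z) * (fderiv ℝ (fderiv ℝ h) z v z + fderiv ℝ h z v))) := by
  have hg1 : ContDiff ℝ 1 (fderiv ℝ g) := hg.fderiv_right (by exact WithTop.coe_le_coe.mpr le_top)
  have hh1 : ContDiff ℝ 1 (fderiv ℝ h) := hh.fderiv_right (by exact WithTop.coe_le_coe.mpr le_top)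
  have hg' : HasFDerivAt (fderiv ℝ g) (fderiv ℝ (fderiv ℝ g) z) z :=
    (hg1.differentiable one_ne_zero z).hasFDerivAt
  have hh' : HasFDerivAt (fderiv ℝ h) (fderiv ℝ (fderiv ℝ h) z) z :=
    (hh1.differentiable one_ne_zero z).hasFDerivAt
  have h0 : HasFDerivAt (fun w : Fin 4 → ℝ => w 0)
      (ContinuousLinearMap.proj (R := ℝ) (φ := fun _ : Fin 4 => ℝ) 0) z :=
    hasFDerivAt_apply 0 z
  have h1 : HasFDerivAt (fun w : Fin 4 → ℝ => w 1)
      (ContinuousLinearMap.proj (R := ℝ) (φ := fun _ : Fin 4 => ℝ) 1) z :=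
    hasFDerivAt_apply 1 z
  have e0 : (fun w : Fin 4 → ℝ => w 0 ^ 2 + w 1 ^ 2)
      = fun w => w 0 * w 0 + w 1 * w 1 := by funext w; ring
  have hc : HasFDerivAt (fun w : Fin 4 → ℝ => w 0 ^ 2 + w 1 ^ 2)
      ((z 0 • ContinuousLinearMap.proj (R := ℝ) (φ := fun _ : Fin 4 => ℝ) 0
          + z 0 • ContinuousLinearMap.proj 0)
        + (z 1 • ContinuousLinearMap.proj (R := ℝ) (φ := fun _ : Fin 4 => ℝ) 1
          + z 1 • ContinuousLinearMap.proj 1)) z := by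
    rw [e0]; exact (h0.mul h0).add (h1.mul h1)
  have hA := hg'.clm_apply (hEv z)
  have hB := hh'.clm_apply (hVv z)
  have hC := hg'.clm_apply (hVv z)
  have hD := hh'.clm_apply (hEv z)
  have H : HasFDerivAt (pb g h) _ z := hc.mul ((hA.mul hB).sub (hC.mul hD))
  rw [H.fderiv]
  simp only [ContinuousLinearMap.add_apply, ContinuousLinearMap.smul_apply,
    ContinuousLinearMap.sub_apply, ContinuousLinearMap.comp_apply,
    ContinuousLinearMap.flip_apply, ContinuousLinearMap.coe_id', id_eq,
    ContinuousLinearMap.proj_apply, smul_eq_mul, Ev, Jc_apply]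
  ring

/-- `π_Σ = |z₀|²(𝓔₀+𝓔₁)∧(𝓥₀+𝓥₁)` is Poisson (its induced bracket
satisfies the Jacobi identity), and the projection `p(z₀,z₁)=z₀` pushes it forward to
`π_M = |z₀|² 𝓔₀∧𝓥₀`, i.e. `∧²(dp)(π_{Σ,z}) = π_{M,p(z)}` for all `z`. -/
theorem stmt12 :
    (∀ f g h : (Fin 4 → ℝ) → ℝ,
      ContDiff ℝ (⊤ : ℕ∞) f → ContDiff ℝ (⊤ : ℕ∞) g → ContDiff ℝ (⊤ : ℕ∞) h →
      ∀ z, pb f (pb g h) z + pb g (pb h f) z + pb h (pb f g) z = 0)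
    ∧ (∀ (z : Fin 4 → ℝ) (α β : ℝ × ℝ →ₗ[ℝ] ℝ),
        PiSigma z (α.comp dp) (β.comp dp) = PiM (dp z) α β) := by
  constructor
  · intro f g h hf hg hh z
    have sf := hf.contDiffAt.isSymmSndFDerivAt (x := z) (by rw [minSmoothness_of_isRCLikeNormedField]; exact WithTop.coe_le_coe.mpr le_top)
    have sg := hg.contDiffAt.isSymmSndFDerivAt (x := z) (by rw [minSmoothness_of_isRCLikeNormedField]; exact WithTop.coe_le_coe.mpr le_top)
    have sh := hh.contDiffAt.isSymmSndFDerivAt (x := z) (by rw [minSmoothness_of_isRCLikeNormedField]; exact WithTop.coe_le_coe.mpr le_top)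
    rw [pb_expand f (pb g h) z, pb_expand g (pb h f) z, pb_expand h (pb f g) z,
      fderiv_pb g h hg hh z (Vv z), fderiv_pb g h hg hh z z,
      fderiv_pb h f hh hf z (Vv z), fderiv_pb h f hh hf z z,
      fderiv_pb f g hf hg z (Vv z), fderiv_pb f g hf hg z z]
    simp only [VvVv, map_neg, Vv0, Vv1,
      sf (Vv z) z, sg (Vv z) z, sh (Vv z) z]
    ring
  · intro z α β
    simp only [PiSigma, PiM, Ev, LinearMap.comp_apply]
    have h1 : dp (Vv z) = (-(dp z).2, (dp z).1) := by
      simp [dp, Vv]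
    have h2 : dp z = (z 0, z 1) := rfl
    rw [h1, h2]

end
end
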